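/- arXiv:2301.09020 — 2 statements merged into one kernel-verified Lean document; each statement's English description precedes it below -/
import Mathlib

section
/- The failure product-limit estimator solves Efron's self-consistency equation: for every real t with 0 < t < τ, Ŝ_PL(t) = Y(t+)/n + (Ŝ_PL(t)/n) · ∑_{u ≤ t} ΔC(u)/Ŝ_PL(u). -/
open Finset
open scoped Classical

noncomputable section

namespace SurvStmt

/-- The finite set of distinct observed times `{X_1, …, X_n}`. -/
def times {n : ℕ} (X : Fin n → ℝ) : Finset ℝ := Finset.image X Finset.univ

/-- `Y(t) = #{i : X_i ≥ t}`, as a real number. -/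
def Yat {n : ℕ} (X : Fin n → ℝ) (t : ℝ) : ℝ :=
  ((Finset.univ.filter (fun i => t ≤ X i)).card : ℝ)

/-- `Y(t+) = #{i : X_i > t}`, as a real number. -/
def Yplus {n : ℕ} (X : Fin n → ℝ) (t : ℝ) : ℝ :=
  ((Finset.univ.filter (fun i => t < X i)).card : ℝ)

/-- `ΔN(t) = #{i : X_i = t, D_i = 1}`, as a real number. -/
def dN {n : ℕ} (X : Fin n → ℝ) (D : Fin n → Bool) (t : ℝ) : ℝ :=
  ((Finset.univ.filter (fun i => X i = t ∧ D i = true)).card : ℝ)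

/-- `ΔC(t) = #{i : X_i = t, D_i = 0}`, as a real number. -/
def dC {n : ℕ} (X : Fin n → ℝ) (D : Fin n → Bool) (t : ℝ) : ℝ :=
  ((Finset.univ.filter (fun i => X i = t ∧ D i = false)).card : ℝ)

/-- `Y†(t) = Y(t) − ΔN(t)`. -/
def Ydag {n : ℕ} (X : Fin n → ℝ) (D : Fin n → Bool) (t : ℝ) : ℝ :=
  Yat X t - dN X D t

/-- `τ = max_i X_i`, the largest observation time (0 if there is no data). -/
def tau {n : ℕ} (X : Fin n → ℝ) : ℝ := WithBot.unbotD 0 ((times X).max)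

/-- Censoring product-limit estimator `K̂(t) = ∏_{u ≤ t} (1 − ΔC(u)/Y†(u))`. -/
def Khat {n : ℕ} (X : Fin n → ℝ) (D : Fin n → Bool) (t : ℝ) : ℝ :=
  ∏ u ∈ (times X).filter (fun u => u ≤ t), (1 - dC X D u / Ydag X D u)

/-- Left limit `K̂(t−) = ∏_{u < t} (1 − ΔC(u)/Y†(u))`. -/
def Kminus {n : ℕ} (X : Fin n → ℝ) (D : Fin n → Bool) (t : ℝ) : ℝ :=
  ∏ u ∈ (times X).filter (fun u => u < t), (1 - dC X D u / Ydag X D u)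

/-- Failure product-limit estimator `Ŝ_PL(t) = ∏_{u ≤ t} (1 − ΔN(u)/Y(u))`. -/
def SPL {n : ℕ} (X : Fin n → ℝ) (D : Fin n → Bool) (t : ℝ) : ℝ :=
  ∏ u ∈ (times X).filter (fun u => u ≤ t), (1 - dN X D u / Yat X u)

/-- Left limit `Ŝ_PL(t−) = ∏_{u < t} (1 − ΔN(u)/Y(u))`. -/
def SPLminus {n : ℕ} (X : Fin n → ℝ) (D : Fin n → Bool) (t : ℝ) : ℝ :=
  ∏ u ∈ (times X).filter (fun u => u < t), (1 - dN X D u / Yat X u)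

/-- IPCW estimator `F̂_IPCW(t) = (1/n) ∑_i D_i 1{X_i ≤ t} / K̂(X_i−)`. -/
def FIPCW {n : ℕ} (X : Fin n → ℝ) (D : Fin n → Bool) (t : ℝ) : ℝ :=
  (1 / (n : ℝ)) * ∑ i : Fin n,
    (if D i = true then (1 : ℝ) else 0) * (if X i ≤ t then (1 : ℝ) else 0) / Kminus X D (X i)

/-- IPCW survival estimator `S̃_IPCW(t) = (1/n) ∑_i D_i 1{X_i > t} / K̂(X_i−)`. -/
def SIPCW {n : ℕ} (X : Fin n → ℝ) (D : Fin n → Bool) (t : ℝ) : ℝ :=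
  (1 / (n : ℝ)) * ∑ i : Fin n,
    (if D i = true then (1 : ℝ) else 0) * (if t < X i then (1 : ℝ) else 0) / Kminus X D (X i)

/-- RTTR jump weight `J(v) = 1/(n · K̂(v−))`. -/
def Jw {n : ℕ} (X : Fin n → ℝ) (D : Fin n → Bool) (v : ℝ) : ℝ :=
  1 / ((n : ℝ) * Kminus X D v)

/-- Redistribute-to-the-right estimator
`Ŝ_RTTR(t) = 1 − ∑_{v ≤ t} [J(v) ΔN(v) 1{v < τ} + J(τ) Y(τ) 1{v = τ}]`. -/
def SRTTR {n : ℕ} (X : Fin n → ℝ) (D : Fin n → Bool) (t : ℝ) : ℝ :=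
  1 - ∑ v ∈ (times X).filter (fun v => v ≤ t),
      (Jw X D v * dN X D v * (if v < tau X then (1 : ℝ) else 0)
        + Jw X D (tau X) * Yat X (tau X) * (if v = tau X then (1 : ℝ) else 0))

/-!
Multiplied by `n`, the equation reads `n Ŝ(t) = Y(t+) + Ŝ(t) ∑_{u ≤ t} ΔC(u)/Ŝ(u)`, which holds
by induction over the observed times up to `t`: before the first one both sides are `n`. Passing
from an observed time to the next one, `a`, multiplies `Ŝ` by `1 − ΔN(a)/Y(a)`, turns the previous
`Y(·+)` into `Y(a)`, and adds the term `ΔC(a)/Ŝ(a)`; the identity survives because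
`(1 − ΔN(a)/Y(a)) Y(a) = Y(a+) + ΔC(a)` (everyone at risk at `a` fails there, is censored there,
or is still at risk after `a`). All the factors of `Ŝ(t)` are positive as long as someone is at
risk after `t`, which is what `t < τ` guarantees.
-/

theorem _root_.Finset.exists_filter_le_eq_filter_lt {α : Type*} [LinearOrder α] [NoMinOrder α]
    (s : Finset α) (a : α) : ∃ b < a, s.filter (· ≤ b) = s.filter (· < a) := by
  obtain ⟨c, hc⟩ := exists_lt a
  let m := (insert c (s.filter (· < a))).max' (insert_nonempty _ _)
  have hm : m < a := by simp [m, max'_lt_iff, hc]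
  refine ⟨m, hm, Finset.filter_congr fun u hu => ⟨fun h => h.trans_lt hm, fun h => ?_⟩⟩
  exact le_max' _ _ (mem_insert_of_mem (mem_filter.mpr ⟨hu, h⟩))

theorem _root_.Finset.filter_lt_eq_of_filter_le_eq_insert {α : Type*} [LinearOrder α]
    {s A : Finset α} {a t : α} (h : s.filter (· ≤ t) = insert a A) (hA : ∀ x ∈ A, x < a) :
    s.filter (· < a) = A := by
  have hmem : ∀ u, u ∈ s ∧ u ≤ t ↔ u = a ∨ u ∈ A := by simpa [Finset.ext_iff] using h
  have hat := ((hmem a).mpr (Or.inl rfl)).2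
  ext u
  simp only [mem_filter]
  refine ⟨fun ⟨hu, hua⟩ => ?_, fun huA => ⟨((hmem u).mpr (Or.inr huA)).1, hA u huA⟩⟩
  exact ((hmem u).mp ⟨hu, hua.le.trans hat⟩).resolve_left hua.ne

theorem _root_.Finset.filter_le_eq_of_filter_le_eq_insert {α : Type*} [LinearOrder α]
    {s A : Finset α} {a t : α} (h : s.filter (· ≤ t) = insert a A) (hA : ∀ x ∈ A, x < a) :
    s.filter (· ≤ a) = s.filter (· ≤ t) := by
  have hmem : ∀ u, u ∈ s ∧ u ≤ t ↔ u = a ∨ u ∈ A := by simpa [Finset.ext_iff] using h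
  have hat := ((hmem a).mpr (Or.inl rfl)).2
  ext u
  simp only [mem_filter]
  refine ⟨fun ⟨hu, hua⟩ => ⟨hu, hua.trans hat⟩, fun hut => ⟨hut.1, ?_⟩⟩
  rcases (hmem u).mp hut with rfl | huA
  exacts [le_rfl, (hA u huA).le]

section

variable {n : ℕ} (X : Fin n → ℝ) (D : Fin n → Bool)

lemma mem_times (i : Fin n) : X i ∈ times X := mem_image_of_mem X (mem_univ i)

lemma iff_of_filter_times_eq {p q : ℝ → Prop}
    (h : (times X).filter p = (times X).filter q) (i : Fin n) : p (X i) ↔ q (X i) := by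
  simpa [mem_times] using congrArg (X i ∈ ·) h

lemma Yat_eq_Yplus_add_dN_add_dC (u : ℝ) : Yat X u = Yplus X u + dN X D u + dC X D u := by
  simp only [Yat, Yplus, dN, dC, card_filter]
  push_cast
  rw [← sum_add_distrib, ← sum_add_distrib]
  refine sum_congr rfl fun i _ => ?_
  rcases lt_trichotomy u (X i) with h | rfl | h
  · simp [h, h.le, h.ne']
  · cases D i <;> simp
  · simp [h.ne, not_le.mpr h, not_lt.mpr h.le]

lemma Yplus_antitone : Antitone (Yplus X) := fun u t hut => by
  unfold Yplus
  exact_mod_cast card_le_card fun i hi => by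
    simp only [mem_filter, mem_univ, true_and] at hi ⊢
    exact hut.trans_lt hi

lemma Yat_pos_of_mem {u : ℝ} (hu : u ∈ times X) : 0 < Yat X u := by
  obtain ⟨i, -, rfl⟩ := mem_image.mp hu
  unfold Yat
  exact_mod_cast card_pos.mpr ⟨i, by simp⟩

lemma Yplus_pos_of_lt_tau (hn : 0 < n) {t : ℝ} (ht : t < tau X) : 0 < Yplus X t := by
  have hne : (times X).Nonempty := ⟨X ⟨0, hn⟩, mem_times X _⟩
  have htau : tau X = (times X).max' hne := by
    rw [tau, ← coe_max' hne]
    rfl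
  obtain ⟨i, -, hi⟩ := mem_image.mp (max'_mem _ hne)
  unfold Yplus
  exact_mod_cast card_pos.mpr ⟨i, by simpa [hi, ← htau]⟩

lemma Yplus_eq_of_filter_eq {s t : ℝ}
    (h : (times X).filter (· ≤ s) = (times X).filter (· ≤ t)) : Yplus X s = Yplus X t := by
  unfold Yplus
  congr 2
  exact filter_congr fun i _ => by
    simpa only [not_le] using (iff_of_filter_times_eq X h i).not

lemma Yplus_eq_Yat_of_filter_eq {b a : ℝ}
    (h : (times X).filter (· ≤ b) = (times X).filter (· < a)) : Yplus X b = Yat X a := by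
  unfold Yplus Yat
  congr 2
  exact filter_congr fun i _ => by
    simpa only [not_le, not_lt] using (iff_of_filter_times_eq X h i).not

lemma Yplus_eq_card_of_filter_eq_empty {t : ℝ} (h : (times X).filter (· ≤ t) = ∅) :
    Yplus X t = n := by
  have hall : ∀ i, t < X i := fun i => not_le.mp fun hi =>
    notMem_empty _ (h ▸ mem_filter.mpr ⟨mem_times X i, hi⟩)
  simp [Yplus, hall]

lemma one_sub_dN_div_Yat_mul {u : ℝ} (hu : u ∈ times X) :
    (1 - dN X D u / Yat X u) * Yat X u = Yplus X u + dC X D u := by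
  rw [sub_mul, div_mul_cancel₀ _ (Yat_pos_of_mem X hu).ne', Yat_eq_Yplus_add_dN_add_dC X D]
  ring

lemma SPL_pos {t : ℝ} (ht : 0 < Yplus X t) : 0 < SPL X D t := by
  refine prod_pos fun u hu => ?_
  obtain ⟨hu, hut⟩ := mem_filter.mp hu
  have hY := one_sub_dN_div_Yat_mul X D hu
  have : 0 < Yplus X u + dC X D u :=
    add_pos_of_pos_of_nonneg (ht.trans_le (Yplus_antitone X hut)) (Nat.cast_nonneg _)
  exact pos_of_mul_pos_left (hY ▸ this) (Yat_pos_of_mem X hu).le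

theorem natCast_mul_SPL_eq {t : ℝ} (ht : 0 < Yplus X t) :
    (n : ℝ) * SPL X D t
      = Yplus X t + SPL X D t * ∑ u ∈ (times X).filter (· ≤ t), dC X D u / SPL X D u := by
  generalize hA : (times X).filter (· ≤ t) = A
  induction A using Finset.induction_on_max generalizing t with
  | empty => simp [SPL, hA, Yplus_eq_card_of_filter_eq_empty X hA]
  | insert a A hlt ih =>
    have haA : a ∉ A := fun h => (hlt a h).false
    have ha : a ∈ times X := (mem_filter.mp (hA ▸ mem_insert_self a A)).1
    obtain ⟨b, -, hb⟩ := (times X).exists_filter_le_eq_filter_lt a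
    have hbA : (times X).filter (· ≤ b) = A :=
      hb.trans (filter_lt_eq_of_filter_le_eq_insert hA hlt)
    have hat := filter_le_eq_of_filter_le_eq_insert hA hlt
    have hYb : Yplus X b = Yat X a := Yplus_eq_Yat_of_filter_eq X hb
    have hYa : Yplus X a = Yplus X t := Yplus_eq_of_filter_eq X hat
    have hSt : SPL X D t = (1 - dN X D a / Yat X a) * SPL X D b := by
      rw [SPL, SPL, hA, hbA, prod_insert haA]
    have hSa : SPL X D a = SPL X D t := by rw [SPL, SPL, hat]
    have hIH := ih (hYb ▸ Yat_pos_of_mem X ha) hbA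
    rw [hYb] at hIH
    rw [sum_insert haA, hSa, mul_add, mul_div_cancel₀ _ (SPL_pos X D ht).ne', ← hYa, hSt]
    linear_combination (1 - dN X D a / Yat X a) * hIH + one_sub_dN_div_Yat_mul X D ha

end

theorem stmt6_general (n : ℕ) (hn : 0 < n) (X : Fin n → ℝ) (D : Fin n → Bool) :
    ∀ t : ℝ, 0 < t → t < tau X →
      SPL X D t
        = Yplus X t / (n : ℝ)
          + (SPL X D t / (n : ℝ))
            * ∑ u ∈ (times X).filter (fun u => u ≤ t), dC X D u / SPL X D u := by
  intro t _ ht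
  have h := natCast_mul_SPL_eq X D (Yplus_pos_of_lt_tau X hn ht)
  field_simp
  linear_combination h

/-- the failure product-limit estimator solves Efron's self-consistency
equation: for `0 < t < τ`,
`Ŝ_PL(t) = Y(t+)/n + (Ŝ_PL(t)/n) ∑_{u ≤ t} ΔC(u)/Ŝ_PL(u)`. -/
theorem stmt6 (n : ℕ) (hn : 0 < n) (X : Fin n → ℝ) (D : Fin n → Bool)
    (hX : ∀ i, 0 < X i) :
    ∀ t : ℝ, 0 < t → t < tau X →
      SPL X D t
        = Yplus X t / (n : ℝ)
          + (SPL X D t / (n : ℝ))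
            * ∑ u ∈ (times X).filter (fun u => u ≤ t), dC X D u / SPL X D u :=
  stmt6_general n hn X D

end SurvStmt
end
end

section
/- The value of the failure product-limit estimator at the last observation time satisfies Ŝ_PL(τ) = ΔC(τ)/(n · K̂(τ−)). -/
open Finset
open scoped Classical

noncomputable section

namespace SurvStmt

/-!
Since `Y(u) = ΔN(u) + ΔC(u) + Y(u+)`, the two product-limit factors at a time `u` multiply to
`(Y†(u)/Y(u)) · (Y(u+)/Y†(u)) = Y(u+)/Y(u)`. As `Y(u+)` is `Y` at the next observed time, the
product over `u < t` telescopes to `Y(t)/n`, so `Ŝ_PL(τ−) K̂(τ−) = Y(τ)/n`. At `τ` nobody survives,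
`Y(τ+) = 0`, and the last failure factor is `1 − ΔN(τ)/Y(τ) = ΔC(τ)/Y(τ)`.
-/

variable {n : ℕ} (X : Fin n → ℝ) (D : Fin n → Bool)

lemma mem_times_s14 {t : ℝ} : t ∈ times X ↔ ∃ i, X i = t := by
  simp [times]

lemma Yat_pos {t : ℝ} {i : Fin n} (h : t ≤ X i) : 0 < Yat X t := by
  unfold Yat
  exact_mod_cast Finset.card_pos.2 ⟨i, by simpa using h⟩

lemma Yplus_pos {t : ℝ} {i : Fin n} (h : t < X i) : 0 < Yplus X t := by
  unfold Yplus
  exact_mod_cast Finset.card_pos.2 ⟨i, by simpa using h⟩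

lemma Yat_eq_dN_add_dC_add_Yplus (t : ℝ) : Yat X t = dN X D t + dC X D t + Yplus X t := by
  simp only [Yat, dN, dC, Yplus, natCast_card_filter, ← sum_add_distrib]
  refine sum_congr rfl fun i _ => ?_
  rcases lt_trichotomy (X i) t with h | rfl | h
  · simp [h.ne, not_le.2 h, not_lt.2 h.le]
  · cases D i <;> simp
  · simp [h, h.le, h.ne']

lemma Ydag_eq_dC_add_Yplus (t : ℝ) : Ydag X D t = dC X D t + Yplus X t := by
  rw [Ydag, Yat_eq_dN_add_dC_add_Yplus X D]
  ring

lemma one_sub_dN_div_Yat {t : ℝ} (h : Yat X t ≠ 0) :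
    1 - dN X D t / Yat X t = Ydag X D t / Yat X t :=
  one_sub_div h

lemma one_sub_dC_div_Ydag {t : ℝ} (h : Ydag X D t ≠ 0) :
    1 - dC X D t / Ydag X D t = Yplus X t / Ydag X D t := by
  rw [one_sub_div h, Ydag_eq_dC_add_Yplus, add_sub_cancel_left]

lemma Ydag_pos {t : ℝ} {i : Fin n} (h : t < X i) : 0 < Ydag X D t := by
  rw [Ydag_eq_dC_add_Yplus]
  exact add_pos_of_nonneg_of_pos (Nat.cast_nonneg _) (Yplus_pos X h)

lemma one_sub_dN_div_mul_one_sub_dC_div {t : ℝ} {i : Fin n} (h : t < X i) :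
    (1 - dN X D t / Yat X t) * (1 - dC X D t / Ydag X D t) = Yplus X t / Yat X t := by
  have hdag := (Ydag_pos X D h).ne'
  rw [one_sub_dN_div_Yat X D (Yat_pos X h.le).ne', one_sub_dC_div_Ydag X D hdag, mul_comm,
    div_mul_div_cancel₀ hdag]

lemma prod_Yplus_div_Yat (hn : 0 < n) (t : ℝ) :
    ∏ u ∈ (times X).filter (· < t), Yplus X u / Yat X u = Yat X t / n := by
  suffices ∀ s, ∀ t, (times X).filter (· < t) = s →
      ∏ u ∈ s, Yplus X u / Yat X u = Yat X t / n from this _ t rfl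
  intro s
  induction s using Finset.induction_on_max with
  | empty =>
    intro t hs
    have hall : ∀ i, t ≤ X i := fun i => not_lt.1 fun hi =>
      (Finset.eq_empty_iff_forall_notMem.1 hs) (X i) (by simp [times, hi])
    have hY : Yat X t = n := by simp [Yat, hall]
    rw [prod_empty, hY, div_self (Nat.cast_ne_zero.2 hn.ne')]
  | insert a s hlt ih =>
    intro t hs
    have hmem : ∀ u, u ∈ times X ∧ u < t ↔ u = a ∨ u ∈ s := fun u => by
      simpa using Finset.ext_iff.1 hs u
    obtain ⟨ha, hat⟩ := (hmem a).2 (Or.inl rfl)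
    obtain ⟨i, rfl⟩ := (mem_times_s14 X).1 ha
    have hs' : (times X).filter (· < X i) = s := by
      ext u
      simp only [mem_filter]
      constructor
      · rintro ⟨hu, hui⟩
        exact ((hmem u).1 ⟨hu, hui.trans hat⟩).resolve_left hui.ne
      · intro hu
        exact ⟨((hmem u).2 (Or.inr hu)).1, hlt u hu⟩
    have hY : Yplus X (X i) = Yat X t := by
      simp only [Yplus, Yat]
      congr 2
      ext j
      simp only [mem_filter, mem_univ, true_and]
      refine ⟨fun hij => not_lt.1 fun hjt => ?_, hat.trans_le⟩
      rcases (hmem (X j)).1 ⟨(mem_times_s14 X).2 ⟨j, rfl⟩, hjt⟩ with h | h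
      · exact hij.ne' h
      · exact (hlt _ h).not_gt hij
    rw [prod_insert fun h => lt_irrefl _ (hlt _ h), ih _ hs',
      div_mul_div_cancel₀ (Yat_pos X le_rfl).ne', hY]

lemma SPLminus_mul_Kminus (hn : 0 < n) {t : ℝ} {i : Fin n} (h : t ≤ X i) :
    SPLminus X D t * Kminus X D t = Yat X t / n := by
  rw [SPLminus, Kminus, ← prod_mul_distrib, ← prod_Yplus_div_Yat X hn t]
  exact prod_congr rfl fun u hu =>
    one_sub_dN_div_mul_one_sub_dC_div X D ((mem_filter.1 hu).2.trans_le h)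

lemma Kminus_pos {t : ℝ} {i : Fin n} (h : t ≤ X i) : 0 < Kminus X D t := by
  refine prod_pos fun u hu => ?_
  have hu : u < X i := (mem_filter.1 hu).2.trans_le h
  rw [one_sub_dC_div_Ydag X D (Ydag_pos X D hu).ne']
  exact div_pos (Yplus_pos X hu) (Ydag_pos X D hu)

lemma SPL_eq_mul_SPLminus {t : ℝ} (ht : t ∈ times X) :
    SPL X D t = (1 - dN X D t / Yat X t) * SPLminus X D t := by
  have hsplit : (times X).filter (· ≤ t) = insert t ((times X).filter (· < t)) := by
    ext u
    simp only [mem_filter, mem_insert, le_iff_lt_or_eq]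
    constructor
    · rintro ⟨hu, hut | rfl⟩
      exacts [Or.inr ⟨hu, hut⟩, Or.inl rfl]
    · rintro (rfl | ⟨hu, hut⟩)
      exacts [⟨ht, Or.inr rfl⟩, ⟨hu, Or.inl hut⟩]
  rw [SPL, SPLminus, hsplit, prod_insert (by simp)]

lemma tau_eq_max' (h : (times X).Nonempty) : tau X = (times X).max' h := by
  rw [tau, ← coe_max' h]
  rfl

lemma X_le_tau (i : Fin n) : X i ≤ tau X := by
  have hi : X i ∈ times X := (mem_times_s14 X).2 ⟨i, rfl⟩
  rw [tau_eq_max' X ⟨_, hi⟩]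
  exact le_max' _ _ hi

lemma exists_X_eq_tau (hn : 0 < n) : ∃ i, X i = tau X := by
  have h : (times X).Nonempty := ⟨_, (mem_times_s14 X).2 ⟨⟨0, hn⟩, rfl⟩⟩
  exact (mem_times_s14 X).1 (tau_eq_max' X h ▸ max'_mem _ h)

lemma Yplus_tau : Yplus X (tau X) = 0 := by
  simp [Yplus, fun i => not_lt.2 (X_le_tau X i)]

theorem stmt14_general (n : ℕ) (hn : 0 < n) (X : Fin n → ℝ) (D : Fin n → Bool) :
    SPL X D (tau X) = dC X D (tau X) / ((n : ℝ) * Kminus X D (tau X)) := by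
  obtain ⟨i, hi⟩ := exists_X_eq_tau X hn
  have hY : Yat X (tau X) ≠ 0 := (Yat_pos X hi.ge).ne'
  have hS : SPLminus X D (tau X) = Yat X (tau X) / (n * Kminus X D (tau X)) := by
    rw [← div_div]
    exact eq_div_of_mul_eq (Kminus_pos X D hi.ge).ne' (SPLminus_mul_Kminus X D hn hi.ge)
  rw [SPL_eq_mul_SPLminus X D ((mem_times_s14 X).2 ⟨i, hi⟩), one_sub_dN_div_Yat X D hY,
    Ydag_eq_dC_add_Yplus, Yplus_tau, add_zero, hS, div_mul_div_cancel₀ hY]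

/-- `Ŝ_PL(τ) = ΔC(τ)/(n K̂(τ−))`. -/
theorem stmt14 (n : ℕ) (hn : 0 < n) (X : Fin n → ℝ) (D : Fin n → Bool)
    (hX : ∀ i, 0 < X i) :
    SPL X D (tau X) = dC X D (tau X) / ((n : ℝ) * Kminus X D (tau X)) :=
  stmt14_general n hn X D

end SurvStmt
end
end
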